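/- arXiv:1910.07200 — 3 statements merged into one kernel-verified Lean document; each statement's English description precedes it below -/
import Mathlib

section
/- For θ > 0 and x ≥ 0, lim_{m→∞} (1/(θ(1+x))) Σ_{i=0}^{∞} [Γ(m-i-1) m^(i+1)/Γ(m)] · (1/i!) · (-ln(1+x)/θ)^i = (1/θ)(1+x)^(-(1/θ+1)), i.e., the expectation of the record-based ML density estimator converges to the Lomax density (asymptotic unbiasedness of the PDF estimator). -/
open Real Filter

private lemma pow_div_factorial_le_exp {y : ℝ} (hy : 0 ≤ y) (n : ℕ) :
    y ^ n / n.factorial ≤ Real.exp y := by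
  have hs := Real.summable_pow_div_factorial y
  have h : Real.exp y = ∑' k : ℕ, y ^ k / k.factorial := by
    rw [Real.exp_eq_exp_ℝ, NormedSpace.exp_eq_tsum_div]
  rw [h]
  exact Summable.le_tsum hs n (fun i _ => by positivity)

private lemma gamma_ratio_eq_prod {m i : ℕ} (h : i + 2 ≤ m) :
    Real.Gamma ((m : ℝ) - i - 1) * (m : ℝ) ^ (i + 1) / Real.Gamma m =
      ∏ j ∈ Finset.range (i + 1), ((m : ℝ) / ((m : ℝ) - 1 - j)) := by
  have h1 : (m : ℝ) - i - 1 = ((m - (i + 2) : ℕ) : ℝ) + 1 := by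
    have := Nat.cast_sub (R := ℝ) h
    push_cast at this ⊢
    linarith
  have h2 : (m : ℝ) = ((m - 1 : ℕ) : ℝ) + 1 := by
    have := Nat.cast_sub (R := ℝ) (show 1 ≤ m by omega)
    push_cast at this ⊢
    linarith
  have hG1 : Real.Gamma ((m : ℝ) - i - 1) = ((m - (i + 2)).factorial : ℝ) := by
    rw [h1, Real.Gamma_nat_eq_factorial]
  have hG2 : Real.Gamma (m : ℝ) = ((m - 1).factorial : ℝ) := by
    rw [h2, Real.Gamma_nat_eq_factorial]
  have hfac : (m - (i + 2)).factorial * (m - 1).descFactorial (i + 1) = (m - 1).factorial := by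
    have := Nat.factorial_mul_descFactorial (show i + 1 ≤ m - 1 by omega)
    rwa [show m - 1 - (i + 1) = m - (i + 2) by omega] at this
  have hDpos : 0 < (m - 1).descFactorial (i + 1) :=
    Nat.pos_of_ne_zero fun hc => by
      have := Nat.descFactorial_eq_zero_iff_lt.mp hc; omega
  have hDprod : (((m - 1).descFactorial (i + 1) : ℕ) : ℝ) =
      ∏ j ∈ Finset.range (i + 1), ((m : ℝ) - 1 - j) := by
    rw [Nat.descFactorial_eq_prod_range, Nat.cast_prod]
    refine Finset.prod_congr rfl fun j hj => ?_
    have hj' : j < i + 1 := Finset.mem_range.mp hj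
    have hc1 := Nat.cast_sub (R := ℝ) (show j ≤ m - 1 by omega)
    have hc2 := Nat.cast_sub (R := ℝ) (show 1 ≤ m by omega)
    rw [hc1, hc2]
    push_cast
    ring
  rw [hG1, hG2, Finset.prod_div_distrib, Finset.prod_const, Finset.card_range, ← hDprod]
  have hDne : (((m - 1).descFactorial (i + 1) : ℕ) : ℝ) ≠ 0 := by positivity
  have hfne : ((m - 1).factorial : ℝ) ≠ 0 := by positivity
  have hcast : ((m - (i + 2)).factorial : ℝ) * (((m - 1).descFactorial (i + 1) : ℕ) : ℝ) =
      ((m - 1).factorial : ℝ) := by exact_mod_cast congrArg (Nat.cast (R := ℝ)) hfac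
  rw [div_eq_div_iff hfne hDne]
  linear_combination ((m : ℝ) ^ (i + 1)) * hcast

private lemma gamma_ratio_zero {m i : ℕ} (h : m ≤ i + 1) :
    Real.Gamma ((m : ℝ) - i - 1) = 0 := by
  have h1 : (m : ℝ) - i - 1 = -((i + 1 - m : ℕ) : ℝ) := by
    have := Nat.cast_sub (R := ℝ) (show m ≤ i + 1 by omega)
    push_cast at this ⊢
    linarith
  rw [h1, Real.Gamma_neg_nat_eq_zero]

private lemma gamma_ratio_nonneg (m i : ℕ) :
    0 ≤ Real.Gamma ((m : ℝ) - i - 1) * (m : ℝ) ^ (i + 1) / Real.Gamma m := by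
  rcases le_or_gt m (i + 1) with hcase | hcase
  · rw [gamma_ratio_zero hcase]; simp
  · rw [gamma_ratio_eq_prod hcase]
    refine Finset.prod_nonneg fun j hj => ?_
    have hj' : j < i + 1 := Finset.mem_range.mp hj
    have hm : (i : ℝ) + 2 ≤ (m : ℝ) := by exact_mod_cast hcase
    have hjle : (j : ℝ) ≤ i := by exact_mod_cast Nat.lt_succ_iff.mp hj'
    have hden : 0 < (m : ℝ) - 1 - j := by linarith
    positivity

private lemma gamma_ratio_tendsto (i : ℕ) :
    Tendsto (fun m : ℕ => Real.Gamma ((m : ℝ) - i - 1) * (m : ℝ) ^ (i + 1) / Real.Gamma m)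
      atTop (nhds 1) := by
  have hfac : ∀ j : ℕ, Tendsto (fun m : ℕ => (m : ℝ) / ((m : ℝ) - 1 - j)) atTop (nhds 1) := by
    intro j
    have hden : Tendsto (fun m : ℕ => (m : ℝ) - 1 - j) atTop atTop := by
      have h := tendsto_atTop_add_const_right atTop (-(1 + (j : ℝ)))
        (tendsto_natCast_atTop_atTop (R := ℝ))
      exact h.congr fun m => by ring
    have h0 : Tendsto (fun m : ℕ => (1 + (j : ℝ)) / ((m : ℝ) - 1 - j)) atTop (nhds 0) :=
      Tendsto.div_atTop tendsto_const_nhds hden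
    have h1 : Tendsto (fun m : ℕ => 1 + (1 + (j : ℝ)) / ((m : ℝ) - 1 - j)) atTop (nhds 1) := by
      simpa using tendsto_const_nhds.add h0
    refine h1.congr' ?_
    filter_upwards [eventually_ge_atTop (j + 2)] with m hm
    have hm' : (j : ℝ) + 2 ≤ (m : ℝ) := by exact_mod_cast hm
    have hne : (m : ℝ) - 1 - j ≠ 0 := by intro hc; nlinarith
    field_simp
    ring
  have hprod : Tendsto (fun m : ℕ => ∏ j ∈ Finset.range (i + 1), ((m : ℝ) / ((m : ℝ) - 1 - j)))
      atTop (nhds 1) := by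
    have h := tendsto_finset_prod (Finset.range (i + 1))
      (fun j (_ : j ∈ Finset.range (i + 1)) => hfac j)
    simpa using h
  refine hprod.congr' ?_
  filter_upwards [eventually_ge_atTop (i + 2)] with m hm
  exact (gamma_ratio_eq_prod hm).symm

private lemma gamma_ratio_le {m i : ℕ} (h : i + 2 ≤ m) :
    Real.Gamma ((m : ℝ) - i - 1) * (m : ℝ) ^ (i + 1) / Real.Gamma m ≤
      Real.exp ((i : ℝ) + 2) := by
  rw [gamma_ratio_eq_prod h]
  have hm : (i : ℝ) + 2 ≤ (m : ℝ) := by exact_mod_cast h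
  have hstep : ∏ j ∈ Finset.range (i + 1), ((m : ℝ) / ((m : ℝ) - 1 - j)) ≤
      ∏ j ∈ Finset.range (i + 1), (((i : ℝ) + 2) / ((i : ℝ) + 1 - j)) := by
    refine Finset.prod_le_prod (fun j hj => ?_) (fun j hj => ?_)
    · have hjle : (j : ℝ) ≤ i := by
        exact_mod_cast Nat.lt_succ_iff.mp (Finset.mem_range.mp hj)
      have hden : 0 < (m : ℝ) - 1 - j := by linarith
      positivity
    · have hjle : (j : ℝ) ≤ i := by
        exact_mod_cast Nat.lt_succ_iff.mp (Finset.mem_range.mp hj)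
      have hden1 : 0 < (m : ℝ) - 1 - j := by linarith
      have hden2 : 0 < (i : ℝ) + 1 - j := by linarith
      rw [div_le_div_iff₀ hden1 hden2]
      nlinarith
  have hprod2 : ∏ j ∈ Finset.range (i + 1), (((i : ℝ) + 2) / ((i : ℝ) + 1 - j)) =
      ((i : ℝ) + 2) ^ (i + 1) / ((i + 1).factorial : ℝ) := by
    rw [Finset.prod_div_distrib, Finset.prod_const, Finset.card_range]
    congr 1
    rw [← Nat.descFactorial_self (i + 1), Nat.descFactorial_eq_prod_range, Nat.cast_prod]
    refine Finset.prod_congr rfl fun j hj => ?_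
    have hj' : j < i + 1 := Finset.mem_range.mp hj
    have hc1 := Nat.cast_sub (R := ℝ) (show j ≤ i + 1 by omega)
    rw [hc1]
    push_cast
    ring
  have hle2 : ((i : ℝ) + 2) ^ (i + 1) / ((i + 1).factorial : ℝ) ≤ Real.exp ((i : ℝ) + 2) :=
    pow_div_factorial_le_exp (by positivity) (i + 1)
  calc ∏ j ∈ Finset.range (i + 1), ((m : ℝ) / ((m : ℝ) - 1 - j)) ≤
      ∏ j ∈ Finset.range (i + 1), (((i : ℝ) + 2) / ((i : ℝ) + 1 - j)) := hstep
    _ = ((i : ℝ) + 2) ^ (i + 1) / ((i + 1).factorial : ℝ) := hprod2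
    _ ≤ Real.exp ((i : ℝ) + 2) := hle2

/-- Asymptotic unbiasedness of the record-based PDF estimator:
`lim_{m→∞} (1/(θ(1+x))) Σ_{i≥0} (Γ(m-i-1)m^(i+1)/Γ(m)) (1/i!) (-ln(1+x)/θ)^i
  = (1/θ)(1+x)^(-(1/θ+1))`. -/
theorem record_pdf_estimator_asymptotically_unbiased (θ x : ℝ) (hθ : 0 < θ) (hx : 0 ≤ x) :
    Tendsto
      (fun m : ℕ =>
        (1 / (θ * (1 + x))) *
          ∑' i : ℕ,
            Real.Gamma ((m : ℝ) - i - 1) * (m : ℝ) ^ (i + 1) / Real.Gamma m *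
              (1 / (i.factorial : ℝ)) * (-Real.log (1 + x) / θ) ^ i)
      atTop (nhds ((1 / θ) * (1 + x) ^ (-(1 / θ + 1)))) := by
  have hx1 : (0 : ℝ) < 1 + x := by linarith
  set u : ℝ := -Real.log (1 + x) / θ with hu
  set bound : ℕ → ℝ := fun i => Real.exp 2 * ((Real.exp 1 * |u|) ^ i / i.factorial) with hb
  have hbsum : Summable bound := (Real.summable_pow_div_factorial _).mul_left _
  have hpt : ∀ i : ℕ, Tendsto (fun m : ℕ =>
      Real.Gamma ((m : ℝ) - i - 1) * (m : ℝ) ^ (i + 1) / Real.Gamma m *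
        (1 / (i.factorial : ℝ)) * u ^ i) atTop (nhds (u ^ i / i.factorial)) := by
    intro i
    have h := (gamma_ratio_tendsto i).mul_const ((1 / (i.factorial : ℝ)) * u ^ i)
    rw [one_mul] at h
    have heq : (1 / (i.factorial : ℝ)) * u ^ i = u ^ i / i.factorial := by ring
    rw [heq] at h
    exact h.congr fun m => by ring
  have hbd : ∀ (m : ℕ) (i : ℕ),
      ‖Real.Gamma ((m : ℝ) - i - 1) * (m : ℝ) ^ (i + 1) / Real.Gamma m *
        (1 / (i.factorial : ℝ)) * u ^ i‖ ≤ bound i := by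
    intro m i
    have hnorm : ‖Real.Gamma ((m : ℝ) - i - 1) * (m : ℝ) ^ (i + 1) / Real.Gamma m *
        (1 / (i.factorial : ℝ)) * u ^ i‖ =
        (Real.Gamma ((m : ℝ) - i - 1) * (m : ℝ) ^ (i + 1) / Real.Gamma m) *
          (1 / (i.factorial : ℝ)) * |u| ^ i := by
      rw [Real.norm_eq_abs, abs_mul, abs_mul, abs_pow,
        abs_of_nonneg (gamma_ratio_nonneg m i),
        abs_of_nonneg (show (0 : ℝ) ≤ 1 / (i.factorial : ℝ) by positivity)]
    rw [hnorm]
    have hbval : bound i = Real.exp ((i : ℝ) + 2) * (1 / (i.factorial : ℝ)) * |u| ^ i := by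
      have hexp : Real.exp ((i : ℝ) + 2) = Real.exp 2 * Real.exp 1 ^ i := by
        rw [Real.exp_add, ← Real.exp_nat_mul, mul_one, mul_comm]
      simp only [hb, hexp, mul_pow]
      ring
    rw [hbval]
    rcases le_or_gt m (i + 1) with hcase | hcase
    · rw [gamma_ratio_zero hcase]
      have : (0 : ℝ) ≤ Real.exp ((i : ℝ) + 2) * (1 / (i.factorial : ℝ)) * |u| ^ i := by
        positivity
      simpa using this
    · exact mul_le_mul_of_nonneg_right
        (mul_le_mul_of_nonneg_right (gamma_ratio_le hcase) (by positivity))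
        (by positivity)
  have hmain := tendsto_tsum_of_dominated_convergence hbsum hpt
    (Eventually.of_forall hbd)
  have hsum : (∑' i : ℕ, u ^ i / i.factorial) = Real.exp u := by
    rw [Real.exp_eq_exp_ℝ, NormedSpace.exp_eq_tsum_div]
  rw [hsum] at hmain
  have hfinal := hmain.const_mul (1 / (θ * (1 + x)))
  have hval : (1 / θ) * (1 + x) ^ (-(1 / θ + 1)) = (1 / (θ * (1 + x))) * Real.exp u := by
    rw [Real.rpow_def_of_pos hx1,
      show Real.log (1 + x) * (-(1 / θ + 1)) = -Real.log (1 + x) / θ + -Real.log (1 + x) by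
        field_simp; ring,
      Real.exp_add, Real.exp_neg, Real.exp_log hx1, hu]
    field_simp
  rw [hval]
  exact hfinal
end

section
/- For θ > 0 and x ≥ 0, lim_{m→∞} Σ_{i=0}^{m-1} [Γ(m-i) m^i/(Γ(m) i!)] (-ln(1+x)/θ)^i = (1+x)^(-1/θ), i.e., lim_{m→∞} E[F̂_m(x)] = F(x;θ) = 1 - (1+x)^(-1/θ) (asymptotic unbiasedness of the CDF estimator). -/
open Real Filter

private lemma factor_tendsto (j : ℕ) :
    Tendsto (fun m : ℕ => (m : ℝ) / ((m : ℝ) - (j + 1))) atTop (nhds 1) := by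
  have hA : Tendsto (fun m : ℕ => ((m : ℝ) - (j + 1))) atTop atTop := by
    simpa [sub_eq_add_neg] using
      tendsto_atTop_add_const_right atTop (-(j + 1 : ℝ)) tendsto_natCast_atTop_atTop
  have hB : Tendsto (fun m : ℕ => ((j : ℝ) + 1) / ((m : ℝ) - (j + 1))) atTop (nhds 0) :=
    Filter.Tendsto.div_atTop tendsto_const_nhds hA
  have hC : Tendsto (fun m : ℕ => 1 + ((j : ℝ) + 1) / ((m : ℝ) - (j + 1))) atTop (nhds 1) := by
    simpa using hB.const_add 1
  refine hC.congr' ?_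
  filter_upwards [eventually_ge_atTop (j + 2)] with m hm
  have hpos : (0 : ℝ) < (m : ℝ) - (j + 1) := by
    have : ((j : ℝ) + 2) ≤ (m : ℝ) := by exact_mod_cast hm
    linarith
  field_simp
  ring

private lemma gamma_ratio_eq (i m : ℕ) (him : i < m) :
    ((m - 1 - i).factorial : ℝ) * (m : ℝ) ^ i / ((m - 1).factorial : ℝ) =
      ∏ j ∈ Finset.range i, (m : ℝ) / ((m : ℝ) - (j + 1)) := by
  have hi : i ≤ m - 1 := by omega
  have hfac : ((m - 1).factorial : ℕ) = (m - 1 - i).factorial * (m - 1).descFactorial i :=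
    (Nat.factorial_mul_descFactorial hi).symm
  have hdesc : ((m - 1).descFactorial i : ℝ) = ∏ j ∈ Finset.range i, ((m : ℝ) - (j + 1)) := by
    rw [Nat.descFactorial_eq_prod_range]
    push_cast
    refine Finset.prod_congr rfl fun j hj => ?_
    have hj' : j < i := Finset.mem_range.mp hj
    have : (j : ℕ) + 1 ≤ m := by omega
    rw [Nat.cast_sub (by omega : j ≤ m - 1), Nat.cast_sub (by omega : 1 ≤ m)]
    push_cast
    ring
  have hpos : ∀ j ∈ Finset.range i, ((m : ℝ) - (j + 1)) ≠ 0 := by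
    intro j hj
    have hj' : j < i := Finset.mem_range.mp hj
    have h1 : (j : ℝ) + 1 < (m : ℝ) := by exact_mod_cast (by omega : j + 1 < m)
    linarith
  have hprodne : (∏ j ∈ Finset.range i, ((m : ℝ) - (j + 1))) ≠ 0 :=
    Finset.prod_ne_zero_iff.mpr hpos
  have hfacne : ((m - 1 - i).factorial : ℝ) ≠ 0 := by positivity
  rw [Finset.prod_div_distrib, Finset.prod_const, Finset.card_range, ← hdesc]
  have : ((m - 1).factorial : ℝ) = ((m - 1 - i).factorial : ℝ) * ((m - 1).descFactorial i : ℝ) := by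
    exact_mod_cast congrArg (Nat.cast : ℕ → ℝ) hfac
  rw [this]
  have hdne : ((m - 1).descFactorial i : ℝ) ≠ 0 := by
    rw [hdesc]; exact hprodne
  field_simp

private lemma ratio_bound (i m : ℕ) (him : i < m) :
    ((m - 1 - i).factorial : ℝ) * (m : ℝ) ^ i / ((m - 1).factorial : ℝ) ≤
      (2 * Real.exp 1) ^ i := by
  set n := m - 1 with hn
  have hk : i ≤ n := by omega
  have hm : m = n + 1 := by omega
  have hfac : (n.factorial : ℕ) = (n - i).factorial * n.descFactorial i :=
    (Nat.factorial_mul_descFactorial hk).symm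
  have hdpos : 0 < n.descFactorial i := by
    rcases Nat.eq_zero_or_pos (n.descFactorial i) with h | h
    · exact absurd (Nat.descFactorial_eq_zero_iff_lt.mp h) (by omega)
    · exact h
  have he1 : (2 : ℝ) ≤ Real.exp 1 := by
    have := Real.add_one_le_exp (1 : ℝ); linarith
  have key : ((m : ℝ)) ^ i ≤ (2 * Real.exp 1) ^ i * (n.descFactorial i : ℝ) := by
    by_cases hcase : 2 * i ≤ m
    · -- m ≤ 2 * (m - i), use (n+1-i)^i ≤ descFactorial
      have h1 : (m : ℕ) ^ i ≤ 2 ^ i * (n + 1 - i) ^ i := by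
        calc (m : ℕ) ^ i ≤ (2 * (n + 1 - i)) ^ i := Nat.pow_le_pow_left (by omega) i
          _ = 2 ^ i * (n + 1 - i) ^ i := by rw [mul_pow]
      have h2 : (n + 1 - i) ^ i ≤ n.descFactorial i := Nat.pow_sub_le_descFactorial n i
      have h3 : (m : ℕ) ^ i ≤ 2 ^ i * n.descFactorial i :=
        h1.trans (Nat.mul_le_mul_left _ h2)
      have h3' : ((m : ℝ)) ^ i ≤ 2 ^ i * (n.descFactorial i : ℝ) := by exact_mod_cast h3
      refine h3'.trans ?_
      have : (2 : ℝ) ^ i ≤ (2 * Real.exp 1) ^ i := by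
        apply pow_le_pow_left₀ (by norm_num)
        nlinarith [Real.exp_pos 1]
      exact mul_le_mul_of_nonneg_right this (by positivity)
    · -- m < 2 i : use descFactorial ≥ i! and m^i ≤ (2i)^i ≤ (2e)^i i!
      push_neg at hcase
      have hkfac : (i.factorial : ℕ) ≤ n.descFactorial i := by
        have hdvd := Nat.factorial_mul_factorial_dvd_factorial hk
        have hle : i.factorial * (n - i).factorial ≤ n.factorial :=
          Nat.le_of_dvd (Nat.factorial_pos n) hdvd
        rw [hfac] at hle
        have := Nat.factorial_pos (n - i)
        calc i.factorial = i.factorial * (n - i).factorial / (n - i).factorial := by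
              rw [Nat.mul_div_cancel _ this]
          _ ≤ (n - i).factorial * n.descFactorial i / (n - i).factorial :=
              Nat.div_le_div_right (by omega)
          _ = n.descFactorial i := by rw [Nat.mul_div_cancel_left _ this]
      have hmk : (m : ℝ) ≤ 2 * i := by exact_mod_cast (by omega : m ≤ 2 * i)
      have h1 : ((m : ℝ)) ^ i ≤ (2 * (i : ℝ)) ^ i :=
        pow_le_pow_left₀ (by positivity) hmk i
      have h2 : ((i : ℝ)) ^ i ≤ Real.exp 1 ^ i * (i.factorial : ℝ) := by
        have := Real.pow_div_factorial_le_exp (x := (i : ℝ)) (Nat.cast_nonneg i) i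
        have hexp : Real.exp (i : ℝ) = Real.exp 1 ^ i := by
          rw [← Real.exp_nat_mul, mul_one]
        rw [hexp] at this
        have hfpos : (0 : ℝ) < (i.factorial : ℝ) := by positivity
        calc ((i : ℝ)) ^ i = ((i : ℝ)) ^ i / (i.factorial : ℝ) * (i.factorial : ℝ) := by
              field_simp
          _ ≤ Real.exp 1 ^ i * (i.factorial : ℝ) :=
              mul_le_mul_of_nonneg_right this hfpos.le
      calc ((m : ℝ)) ^ i ≤ (2 * (i : ℝ)) ^ i := h1
        _ = 2 ^ i * ((i : ℝ)) ^ i := by rw [mul_pow]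
        _ ≤ 2 ^ i * (Real.exp 1 ^ i * (i.factorial : ℝ)) := by
            apply mul_le_mul_of_nonneg_left h2 (by positivity)
        _ = (2 * Real.exp 1) ^ i * (i.factorial : ℝ) := by rw [mul_pow]; ring
        _ ≤ (2 * Real.exp 1) ^ i * (n.descFactorial i : ℝ) := by
            apply mul_le_mul_of_nonneg_left (by exact_mod_cast hkfac) (by positivity)
  -- now conclude
  have hfacR : (n.factorial : ℝ) = ((n - i).factorial : ℝ) * (n.descFactorial i : ℝ) := by
    exact_mod_cast congrArg (Nat.cast : ℕ → ℝ) hfac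
  have hfpos : (0 : ℝ) < (n.factorial : ℝ) := by positivity
  rw [div_le_iff₀ hfpos, hfacR]
  have hfi : (0 : ℝ) < ((n - i).factorial : ℝ) := by positivity
  calc ((n - i).factorial : ℝ) * (m : ℝ) ^ i
      ≤ ((n - i).factorial : ℝ) * ((2 * Real.exp 1) ^ i * (n.descFactorial i : ℝ)) :=
        mul_le_mul_of_nonneg_left key hfi.le
    _ = (2 * Real.exp 1) ^ i * (((n - i).factorial : ℝ) * (n.descFactorial i : ℝ)) := by ring

private lemma gamma_cast (i m : ℕ) (him : i < m) :
    Real.Gamma ((m : ℝ) - i) = ((m - 1 - i).factorial : ℝ) := by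
  have h1 : (m : ℝ) - i = (((m - 1 - i : ℕ) : ℝ) + 1) := by
    have : ((m - 1 - i : ℕ) : ℝ) = (m : ℝ) - i - 1 := by
      rw [Nat.cast_sub (by omega : i ≤ m - 1), Nat.cast_sub (by omega : 1 ≤ m)]
      push_cast; ring
    rw [this]; ring
  rw [h1, Real.Gamma_nat_eq_factorial]

private lemma gamma_cast' (m : ℕ) (hm : 1 ≤ m) :
    Real.Gamma (m : ℝ) = ((m - 1).factorial : ℝ) := by
  have h1 : (m : ℝ) = (((m - 1 : ℕ) : ℝ) + 1) := by
    rw [Nat.cast_sub (by omega : 1 ≤ m)]; push_cast; ring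
  rw [h1, Real.Gamma_nat_eq_factorial]

/-- Asymptotic unbiasedness of the record-based CDF estimator:
`lim_{m→∞} Σ_{i=0}^{m-1} Γ(m-i)m^i/(Γ(m) i!) (-ln(1+x)/θ)^i = (1+x)^(-1/θ)`. -/
theorem record_cdf_estimator_asymptotically_unbiased (θ x : ℝ) (hθ : 0 < θ) (hx : 0 ≤ x) :
    Tendsto
      (fun m : ℕ =>
        ∑ i ∈ Finset.range m,
          Real.Gamma ((m : ℝ) - i) * (m : ℝ) ^ i / (Real.Gamma m * (i.factorial : ℝ)) *
            (-Real.log (1 + x) / θ) ^ i)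
      atTop (nhds ((1 + x) ^ (-(1 / θ)))) := by
  set y : ℝ := -Real.log (1 + x) / θ with hy
  have h1x : (0 : ℝ) < 1 + x := by linarith
  set F : ℕ → ℕ → ℝ := fun m i =>
    if i < m then
      Real.Gamma ((m : ℝ) - i) * (m : ℝ) ^ i / (Real.Gamma m * (i.factorial : ℝ)) * y ^ i
    else 0 with hF
  have hFval : ∀ m i, i < m → F m i =
      ((m - 1 - i).factorial : ℝ) * (m : ℝ) ^ i / (((m - 1).factorial : ℝ) * (i.factorial : ℝ))
        * y ^ i := by
    intro m i him
    simp only [hF, if_pos him, gamma_cast i m him, gamma_cast' m (by omega)]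
  have key : Tendsto (fun m : ℕ => ∑' i : ℕ, F m i) atTop
      (nhds (∑' i : ℕ, y ^ i / (i.factorial : ℝ))) := by
    apply tendsto_tsum_of_dominated_convergence
      (bound := fun i : ℕ => (2 * Real.exp 1 * |y|) ^ i / (i.factorial : ℝ))
    · exact Real.summable_pow_div_factorial _
    · intro i
      have hprod : Tendsto (fun m : ℕ =>
          (∏ j ∈ Finset.range i, (m : ℝ) / ((m : ℝ) - (j + 1))) * (y ^ i / (i.factorial : ℝ)))
          atTop (nhds (1 * (y ^ i / (i.factorial : ℝ)))) := by
        apply Tendsto.mul_const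
        have := tendsto_finset_prod (Finset.range i)
          (fun j _ => factor_tendsto j)
        simpa using this
      rw [one_mul] at hprod
      refine hprod.congr' ?_
      filter_upwards [eventually_ge_atTop (i + 1)] with m hm
      have him : i < m := by omega
      rw [hFval m i him, ← gamma_ratio_eq i m him]
      have hfne : ((i.factorial : ℝ)) ≠ 0 := by positivity
      have hfne2 : (((m - 1).factorial : ℝ)) ≠ 0 := by positivity
      field_simp
    · filter_upwards with m
      intro i
      by_cases him : i < m
      · rw [hFval m i him, Real.norm_eq_abs]
        rw [abs_mul, abs_pow]
        have h1 : |((m - 1 - i).factorial : ℝ) * (m : ℝ) ^ i /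
            (((m - 1).factorial : ℝ) * (i.factorial : ℝ))| =
            ((m - 1 - i).factorial : ℝ) * (m : ℝ) ^ i /
            (((m - 1).factorial : ℝ) * (i.factorial : ℝ)) := abs_of_nonneg (by positivity)
        rw [h1]
        have hb := ratio_bound i m him
        calc ((m - 1 - i).factorial : ℝ) * (m : ℝ) ^ i /
              (((m - 1).factorial : ℝ) * (i.factorial : ℝ)) * |y| ^ i
            = (((m - 1 - i).factorial : ℝ) * (m : ℝ) ^ i / ((m - 1).factorial : ℝ))
              * (|y| ^ i / (i.factorial : ℝ)) := by
              ring
          _ ≤ (2 * Real.exp 1) ^ i * (|y| ^ i / (i.factorial : ℝ)) :=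
              mul_le_mul_of_nonneg_right hb (by positivity)
          _ = (2 * Real.exp 1 * |y|) ^ i / (i.factorial : ℝ) := by
              rw [mul_pow, mul_pow]; ring
      · simp only [hF, if_neg him, norm_zero]
        positivity
  have htsum : (∑' i : ℕ, y ^ i / (i.factorial : ℝ)) = Real.exp y := by
    rw [Real.exp_eq_exp_ℝ, NormedSpace.exp_eq_tsum_div]
  have hrpow : (1 + x) ^ (-(1 / θ)) = Real.exp y := by
    rw [Real.rpow_def_of_pos h1x, hy]
    congr 1
    field_simp
  rw [hrpow, ← htsum]
  refine key.congr ?_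
  intro m
  rw [tsum_eq_sum (s := Finset.range m) (fun i hi => if_neg (by simpa using hi))]
  exact Finset.sum_congr rfl fun i hi => if_pos (Finset.mem_range.mp hi)
end

section
/- Let θ > 0 and x ≥ 0. Define V_m = (m/(θ(1+x)))² Σ_{i=0}^{m-2} [Γ(m-i-2)/(Γ(m) i!)](-2m ln(1+x)/θ)^i − ((m/(θ(1+x))) Σ_{i=0}^{m-1} [Γ(m-i-1)/(Γ(m) i!)](-m ln(1+x)/θ)^i)². Then lim_{m→∞} V_m = 0. -/
open Real Filter Topology

noncomputable def Faux (p : ℕ) (t : ℝ) (m i : ℕ) : ℝ :=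
  (m : ℝ) ^ p * (Real.Gamma ((m : ℝ) - i - p) / (Real.Gamma m * (i.factorial : ℝ))) * (t * m) ^ i

lemma Faux_eq_zero {p : ℕ} (t : ℝ) {m i : ℕ} (h : m ≤ i + p) : Faux p t m i = 0 := by
  have h1 : (m : ℝ) - i - p = -((i + p - m : ℕ) : ℝ) := by
    push_cast [h]; ring
  simp [Faux, h1, Real.Gamma_neg_nat_eq_zero]

lemma Faux_eq {p : ℕ} (t : ℝ) {m i : ℕ} (h : i + p + 1 ≤ m) :
    Faux p t m i = (t ^ i / (i.factorial : ℝ)) *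
      ((m : ℝ) ^ (i + p) / (((m - 1).descFactorial (i + p) : ℕ) : ℝ)) := by
  obtain ⟨d, rfl⟩ : ∃ d, m = i + p + 1 + d := ⟨m - (i + p + 1), by omega⟩
  set m := i + p + 1 + d with hm
  have h1 : (m : ℝ) - i - p = (d : ℝ) + 1 := by push_cast [hm]; ring
  have h2 : (m : ℝ) = ((i + p + d : ℕ) : ℝ) + 1 := by push_cast [hm]; ring
  have h3 : m - 1 = i + p + d := by omega
  have h4 : (i + p + d).factorial = d.factorial * (i + p + d).descFactorial (i + p) := by
    have h5 := Nat.factorial_mul_descFactorial (n := i + p + d) (k := i + p) (by omega)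
    rw [show i + p + d - (i + p) = d by omega] at h5
    exact h5.symm
  rw [Faux, h1, h2, Real.Gamma_nat_eq_factorial, Real.Gamma_nat_eq_factorial, h3, h4]
  have hd : (d.factorial : ℝ) ≠ 0 := by positivity
  have hi : (i.factorial : ℝ) ≠ 0 := by positivity
  have hD : (((i + p + d).descFactorial (i + p) : ℕ) : ℝ) ≠ 0 := by
    have : (i + p + d).descFactorial (i + p) ≠ 0 := by
      rw [Ne, Nat.descFactorial_eq_zero_iff_lt]; omega
    exact_mod_cast this
  push_cast
  rw [mul_pow, pow_add]
  field_simp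

lemma pow_self_le_exp_mul_factorial (k : ℕ) :
    (k : ℝ) ^ k ≤ Real.exp 1 ^ k * (k.factorial : ℝ) := by
  have h1 : (k : ℝ) ^ k / (k.factorial : ℝ) ≤
      ∑ i ∈ Finset.range (k + 1), (k : ℝ) ^ i / (i.factorial : ℝ) := by
    refine Finset.single_le_sum (f := fun i => (k : ℝ) ^ i / (i.factorial : ℝ)) ?_ ?_
    · intro i _; positivity
    · simp
  have h2 := Real.sum_le_exp_of_nonneg (x := (k : ℝ)) (by positivity) (k + 1)
  have h3 : Real.exp (k : ℝ) = Real.exp 1 ^ k := by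
    rw [← Real.exp_nat_mul]; norm_num
  have hf : (0 : ℝ) < (k.factorial : ℝ) := by positivity
  rw [div_le_iff₀ hf] at h1
  calc (k : ℝ) ^ k ≤ (∑ i ∈ Finset.range (k + 1), (k : ℝ) ^ i / (i.factorial : ℝ)) *
        (k.factorial : ℝ) := h1
    _ ≤ Real.exp (k : ℝ) * (k.factorial : ℝ) := by
        apply mul_le_mul_of_nonneg_right _ hf.le
        simpa using h2
    _ = Real.exp 1 ^ k * (k.factorial : ℝ) := by rw [h3]

lemma Qbound (k m : ℕ) (h : k + 1 ≤ m) :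
    (m : ℝ) ^ k ≤ (2 * Real.exp 1) ^ k * (((m - 1).descFactorial k : ℕ) : ℝ) := by
  have hE : (1 : ℝ) ≤ Real.exp 1 := by
    have := Real.add_one_le_exp (1 : ℝ); linarith
  have hDpos : (0 : ℝ) < (((m - 1).descFactorial k : ℕ) : ℝ) := by
    have : (m - 1).descFactorial k ≠ 0 := by
      rw [Ne, Nat.descFactorial_eq_zero_iff_lt]; omega
    exact_mod_cast Nat.pos_of_ne_zero this
  rcases le_or_gt (2 * k) m with h2 | h2
  · -- m ≥ 2k : descFactorial ≥ (m-k)^k and m ≤ 2(m-k)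
    have hD : ((m - k : ℕ) : ℝ) ^ k ≤ (((m - 1).descFactorial k : ℕ) : ℝ) := by
      have := Nat.pow_sub_le_descFactorial (m - 1) k
      rw [show m - 1 + 1 - k = m - k by omega] at this
      exact_mod_cast this
    have hm2 : (m : ℝ) ≤ 2 * ((m - k : ℕ) : ℝ) := by
      have : m ≤ 2 * (m - k) := by omega
      exact_mod_cast this
    calc (m : ℝ) ^ k ≤ (2 * ((m - k : ℕ) : ℝ)) ^ k := by
          exact pow_le_pow_left₀ (by positivity) hm2 k
      _ = 2 ^ k * ((m - k : ℕ) : ℝ) ^ k := by rw [mul_pow]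
      _ ≤ 2 ^ k * (((m - 1).descFactorial k : ℕ) : ℝ) := by
          apply mul_le_mul_of_nonneg_left hD (by positivity)
      _ ≤ (2 * Real.exp 1) ^ k * (((m - 1).descFactorial k : ℕ) : ℝ) := by
          apply mul_le_mul_of_nonneg_right _ hDpos.le
          exact pow_le_pow_left₀ (by norm_num) (by linarith) k
  · -- m < 2k : descFactorial ≥ k! and m ≤ 2k
    have hD : (k.factorial : ℝ) ≤ (((m - 1).descFactorial k : ℕ) : ℝ) := by
      have h' : k.descFactorial k ≤ (m - 1).descFactorial k :=
        Nat.descFactorial_le k (by omega)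
      rw [Nat.descFactorial_self] at h'
      exact_mod_cast h'
    have hm2 : (m : ℝ) ≤ 2 * (k : ℝ) := by exact_mod_cast h2.le
    calc (m : ℝ) ^ k ≤ (2 * (k : ℝ)) ^ k := pow_le_pow_left₀ (by positivity) hm2 k
      _ = 2 ^ k * (k : ℝ) ^ k := by rw [mul_pow]
      _ ≤ 2 ^ k * (Real.exp 1 ^ k * (k.factorial : ℝ)) := by
          apply mul_le_mul_of_nonneg_left (pow_self_le_exp_mul_factorial k) (by positivity)
      _ = (2 * Real.exp 1) ^ k * (k.factorial : ℝ) := by rw [mul_pow]; ring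
      _ ≤ (2 * Real.exp 1) ^ k * (((m - 1).descFactorial k : ℕ) : ℝ) := by
          apply mul_le_mul_of_nonneg_left hD (by positivity)

lemma Faux_bound (p : ℕ) (t : ℝ) (m i : ℕ) :
    |Faux p t m i| ≤ (2 * Real.exp 1) ^ (i + p) * |t| ^ i / (i.factorial : ℝ) := by
  rcases le_or_gt m (i + p) with h | h
  · rw [Faux_eq_zero t h, abs_zero]; positivity
  · have h' : i + p + 1 ≤ m := h
    have hDpos : (0 : ℝ) < (((m - 1).descFactorial (i + p) : ℕ) : ℝ) := by
      have : (m - 1).descFactorial (i + p) ≠ 0 := by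
        rw [Ne, Nat.descFactorial_eq_zero_iff_lt]; omega
      exact_mod_cast Nat.pos_of_ne_zero this
    rw [Faux_eq t h', abs_mul, abs_div, abs_div, abs_pow, abs_pow]
    rw [abs_of_nonneg (a := ((m:ℝ))) (by positivity),
      abs_of_nonneg (a := ((i.factorial : ℕ) : ℝ)) (by positivity),
      abs_of_nonneg (a := (((m - 1).descFactorial (i + p) : ℕ) : ℝ)) hDpos.le]
    have hQ : (m : ℝ) ^ (i + p) / (((m - 1).descFactorial (i + p) : ℕ) : ℝ) ≤
        (2 * Real.exp 1) ^ (i + p) := by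
      rw [div_le_iff₀ hDpos]
      exact Qbound (i + p) m h'
    calc |t| ^ i / (i.factorial : ℝ) *
          ((m : ℝ) ^ (i + p) / (((m - 1).descFactorial (i + p) : ℕ) : ℝ))
        ≤ |t| ^ i / (i.factorial : ℝ) * (2 * Real.exp 1) ^ (i + p) := by
          apply mul_le_mul_of_nonneg_left hQ (by positivity)
      _ = (2 * Real.exp 1) ^ (i + p) * |t| ^ i / (i.factorial : ℝ) := by ring

lemma descFactorial_div_pow_tendsto (k : ℕ) :
    Tendsto (fun m : ℕ => (((m - 1).descFactorial k : ℕ) : ℝ) / (m : ℝ) ^ k)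
      atTop (𝓝 1) := by
  induction k with
  | zero => simpa using tendsto_const_nhds
  | succ k ih =>
    have h1 : Tendsto (fun m : ℕ => ((m - 1 - k : ℕ) : ℝ) / (m : ℝ)) atTop (𝓝 1) := by
      have h0 : Tendsto (fun m : ℕ => 1 - ((k : ℝ) + 1) / (m : ℝ)) atTop (𝓝 1) := by
        have := tendsto_const_div_atTop_nhds_zero_nat ((k : ℝ) + 1)
        simpa using tendsto_const_nhds.sub this
      apply h0.congr'
      filter_upwards [eventually_ge_atTop (k + 1)] with m hm
      have hm0 : (m : ℝ) ≠ 0 := Nat.cast_ne_zero.mpr (by omega)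
      have : ((m - 1 - k : ℕ) : ℝ) = (m : ℝ) - ((k : ℝ) + 1) := by
        have : m - 1 - k + (k + 1) = m := by omega
        have := congrArg (fun n : ℕ => (n : ℝ)) this
        push_cast at this; linarith
      rw [this]; field_simp
    have heq : (fun m : ℕ => (((m - 1).descFactorial (k + 1) : ℕ) : ℝ) / (m : ℝ) ^ (k + 1)) =
        fun m : ℕ => (((m - 1 - k : ℕ) : ℝ) / (m : ℝ)) *
          ((((m - 1).descFactorial k : ℕ) : ℝ) / (m : ℝ) ^ k) := by
      funext m
      rw [Nat.descFactorial_succ]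
      push_cast
      rw [pow_succ]
      rw [mul_div_mul_comm]
      ring
    rw [heq]
    simpa using h1.mul ih

lemma pow_div_descFactorial_tendsto (k : ℕ) :
    Tendsto (fun m : ℕ => (m : ℝ) ^ k / (((m - 1).descFactorial k : ℕ) : ℝ))
      atTop (𝓝 1) := by
  have := (descFactorial_div_pow_tendsto k).inv₀ one_ne_zero
  simpa [inv_div] using this

lemma main_tendsto (p : ℕ) (t : ℝ) :
    Tendsto (fun m : ℕ => ∑' i : ℕ, Faux p t m i) atTop (𝓝 (Real.exp t)) := by
  have hexp : Real.exp t = ∑' i : ℕ, t ^ i / (i.factorial : ℝ) := by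
    rw [Real.exp_eq_exp_ℝ, NormedSpace.exp_eq_tsum_div]
  rw [hexp]
  have hsum : Summable (fun i : ℕ => (2 * Real.exp 1) ^ (i + p) * |t| ^ i / (i.factorial : ℝ)) := by
    apply Summable.congr (f := fun i : ℕ =>
      (2 * Real.exp 1) ^ p * ((2 * Real.exp 1 * |t|) ^ i / (i.factorial : ℝ)))
    · exact (Real.summable_pow_div_factorial (2 * Real.exp 1 * |t|)).mul_left _
    · intro i; rw [pow_add, mul_pow]; ring
  refine tendsto_tsum_of_dominated_convergence hsum ?_ ?_
  · intro i
    have h := (pow_div_descFactorial_tendsto (i + p)).const_mul (t ^ i / (i.factorial : ℝ))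
    rw [mul_one] at h
    apply h.congr'
    filter_upwards [eventually_ge_atTop (i + p + 1)] with m hm
    exact (Faux_eq t hm).symm
  · filter_upwards with m i
    rw [Real.norm_eq_abs]
    exact Faux_bound p t m i

/-- The variance `V_m` of the record-based ML density estimator tends to `0`:
`V_m = (m/(θ(1+x)))² Σ_{i=0}^{m-2} Γ(m-i-2)/(Γ(m) i!) (-2m ln(1+x)/θ)^i
      − ((m/(θ(1+x))) Σ_{i=0}^{m-1} Γ(m-i-1)/(Γ(m) i!) (-m ln(1+x)/θ)^i)² → 0`. -/
theorem record_pdf_estimator_variance_tendsto_zero (θ x : ℝ) (hθ : 0 < θ) (hx : 0 ≤ x) :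
    Tendsto
      (fun m : ℕ =>
        ((m : ℝ) / (θ * (1 + x))) ^ 2 *
            (∑ i ∈ Finset.range (m - 1),
              Real.Gamma ((m : ℝ) - i - 2) / (Real.Gamma m * (i.factorial : ℝ)) *
                (-2 * (m : ℝ) * Real.log (1 + x) / θ) ^ i) -
          (((m : ℝ) / (θ * (1 + x))) *
              ∑ i ∈ Finset.range m,
                Real.Gamma ((m : ℝ) - i - 1) / (Real.Gamma m * (i.factorial : ℝ)) *
                  (-(m : ℝ) * Real.log (1 + x) / θ) ^ i) ^ 2)
      atTop (nhds 0) := by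
  set L : ℝ := Real.log (1 + x) with hL
  set c : ℝ := (θ * (1 + x))⁻¹ with hc
  set t₁ : ℝ := -L / θ with ht₁
  set t₂ : ℝ := -2 * L / θ with ht₂
  have h2 := main_tendsto 2 t₂
  have h1 := main_tendsto 1 t₁
  have hcomb : Tendsto
      (fun m : ℕ => c ^ 2 * ∑' i : ℕ, Faux 2 t₂ m i - (c * ∑' i : ℕ, Faux 1 t₁ m i) ^ 2)
      atTop (𝓝 (c ^ 2 * Real.exp t₂ - (c * Real.exp t₁) ^ 2)) :=
    ((tendsto_const_nhds.mul h2).sub ((tendsto_const_nhds.mul h1).pow 2))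
  have hval : c ^ 2 * Real.exp t₂ - (c * Real.exp t₁) ^ 2 = 0 := by
    have : t₂ = t₁ + t₁ := by rw [ht₁, ht₂]; ring
    rw [this, Real.exp_add]; ring
  rw [hval] at hcomb
  apply hcomb.congr
  intro m
  have hs2 : ∑' i : ℕ, Faux 2 t₂ m i = ∑ i ∈ Finset.range (m - 1), Faux 2 t₂ m i := by
    apply tsum_eq_sum
    intro i hi
    simp only [Finset.mem_range, not_lt] at hi
    exact Faux_eq_zero t₂ (by omega)
  have hs1 : ∑' i : ℕ, Faux 1 t₁ m i = ∑ i ∈ Finset.range m, Faux 1 t₁ m i := by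
    apply tsum_eq_sum
    intro i hi
    simp only [Finset.mem_range, not_lt] at hi
    exact Faux_eq_zero t₁ (by omega)
  rw [hs2, hs1, Finset.mul_sum, Finset.mul_sum, Finset.mul_sum, Finset.mul_sum]
  congr 1
  · apply Finset.sum_congr rfl
    intro i _
    have hb : (-2 * (m : ℝ) * L / θ) = t₂ * m := by rw [ht₂]; ring
    rw [hb, Faux]
    rw [hc]
    ring
  · congr 1
    apply Finset.sum_congr rfl
    intro i _
    have hb : (-(m : ℝ) * L / θ) = t₁ * m := by rw [ht₁]; ring
    rw [hb, Faux]
    rw [hc]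
    push_cast
    ring
end
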